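/- (Miller's rank-one inverse update) Let $G$ be an invertible $n imes n$ real matrix, and let $E$ be a rank-one matrix such that $G + E$ is invertible. Then $1 + \operatorname{tr}(G^{-1} E) \ne 0$ and $(G + E)^{-1} = G^{-1} - \frac{1}{1 + \operatorname{tr}(G^{-1} E)} G^{-1} E G^{-1}$. -/

import Mathlib

/-!
Put `H = G⁻¹ E`, so that `G + E = G (1 + H)`. A matrix of rank one is `u vᵀ`, hence
`H² = tr H • H`. For such an `H` with `t = tr H`, `1 - (1 + t)⁻¹ H` inverts `1 + H`; and if
`1 + t = 0` then `(1 + H) H = 0`, which the invertibility of `1 + H` forces to `H = 0`,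
contradicting rank one.
-/

open Matrix

namespace Matrix

variable {m n K : Type*} [Fintype n] [Field K]

theorem exists_eq_vecMulVec_of_rank_le_one {A : Matrix m n K} (hA : A.rank ≤ 1) :
    ∃ u v, A = vecMulVec u v := by
  classical
  obtain ⟨⟨u, _⟩, hu⟩ :=
    finrank_le_one_iff.mp (show Module.finrank K (LinearMap.range A.mulVecLin) ≤ 1 from hA)
  have hcol : ∀ j, ∃ c : K, c • u = A.col j := fun j => by
    obtain ⟨c, hc⟩ := hu ⟨A.col j, Pi.single j 1, mulVec_single_one A j⟩
    exact ⟨c, congrArg Subtype.val hc⟩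
  choose v hv using hcol
  refine ⟨u, v, ext fun i j => ?_⟩
  rw [vecMulVec_apply, mul_comm, ← col_apply A j i, ← hv j, Pi.smul_apply, smul_eq_mul]

theorem mul_self_eq_trace_smul_of_rank_le_one {A : Matrix n n K} (hA : A.rank ≤ 1) :
    A * A = A.trace • A := by
  obtain ⟨u, v, rfl⟩ := exists_eq_vecMulVec_of_rank_le_one hA
  rw [vecMulVec_mul_vecMulVec, trace_vecMulVec, dotProduct_comm, vecMulVec_smul]

end Matrix

section MulSelfEqSmul

variable {K A : Type*} [Field K] [Ring A] [Algebra K A] {H : A} {t : K}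

theorem one_add_smul_ne_zero_of_mul_self_eq_smul (hH : H * H = t • H) (hunit : IsUnit (1 + H))
    (hH0 : H ≠ 0) : 1 + t ≠ 0 := by
  intro ht
  refine hH0 (hunit.mul_right_eq_zero.mp ?_)
  calc (1 + H) * H = (1 + t) • H := by rw [add_mul, one_mul, hH, add_smul, one_smul]
    _ = 0 := by rw [ht, zero_smul]

theorem one_add_mul_one_sub_smul_of_mul_self_eq_smul (hH : H * H = t • H) (ht : 1 + t ≠ 0) :
    (1 + H) * (1 - (1 + t)⁻¹ • H) = 1 := by
  have hc : (1 + t)⁻¹ + (1 + t)⁻¹ * t = 1 := by field_simp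
  rw [mul_sub, mul_one, mul_smul_comm, add_mul, one_mul, hH, smul_add, smul_smul, ← add_smul, hc,
    one_smul, add_sub_cancel_right]

end MulSelfEqSmul

/-- Miller's rank-one inverse update theorem. -/
theorem miller_rank_one_update {n : ℕ} (G E : Matrix (Fin n) (Fin n) ℝ)
    (hG : IsUnit G.det) (hE : E.rank = 1) (hGE : IsUnit (G + E).det) :
    1 + (G⁻¹ * E).trace ≠ 0 ∧
      (G + E)⁻¹ = G⁻¹ - (1 + (G⁻¹ * E).trace)⁻¹ • (G⁻¹ * E * G⁻¹) := by
  set H := G⁻¹ * E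
  have hrank : H.rank = 1 := by
    rw [rank_mul_eq_right_of_isUnit_det _ _ (isUnit_nonsing_inv_det G hG), hE]
  have hHH : H * H = H.trace • H := mul_self_eq_trace_smul_of_rank_le_one hrank.le
  have hfactor : G + E = G * (1 + H) := by
    rw [mul_add, mul_one, ← mul_assoc, mul_nonsing_inv _ hG, one_mul]
  have hunit : IsUnit (1 + H) := by
    rw [hfactor, det_mul] at hGE
    exact (isUnit_iff_isUnit_det _).mpr (isUnit_of_mul_isUnit_right hGE)
  have hH0 : H ≠ 0 := by
    intro h
    simp [h] at hrank
  have ht := one_add_smul_ne_zero_of_mul_self_eq_smul hHH hunit hH0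
  refine ⟨ht, ?_⟩
  rw [hfactor, Matrix.mul_inv_rev,
    inv_eq_right_inv (one_add_mul_one_sub_smul_of_mul_self_eq_smul hHH ht), sub_mul, one_mul,
    smul_mul]
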